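/- Let T be a theory in the language of second-order arithmetic. If T has a β-model, then T has a β-model containing no countable coded β-model of T. -/

import Mathlib

namespace Paper

/-! ### Syntax and semantics of second-order arithmetic (L₂) -/

/-- Number terms of L₂. -/
inductive Term where
  | var : ℕ → Term
  | zero : Term
  | one : Term
  | add : Term → Term → Term
  | mul : Term → Term → Term

/-- Formulas of L₂.  Number variables and set variables are indexed by naturals;
`mem t i` means `t ∈ X_i`. -/
inductive Formula where
  | eq : Term → Term → Formula
  | lt : Term → Term → Formula
  | mem : Term → ℕ → Formula
  | not : Formula → Formula
  | and : Formula → Formula → Formula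
  | or : Formula → Formula → Formula
  | nall : ℕ → Formula → Formula
  | nex : ℕ → Formula → Formula
  | sall : ℕ → Formula → Formula
  | sex : ℕ → Formula → Formula

def Term.val (e : ℕ → ℕ) : Term → ℕ
  | .var i => e i
  | .zero => 0
  | .one => 1
  | .add s t => s.val e + t.val e
  | .mul s t => s.val e * t.val e

/-- Satisfaction in the full standard model: set quantifiers range over all subsets of ℕ. -/
def Formula.Sat (e : ℕ → ℕ) (E : ℕ → Set ℕ) : Formula → Prop
  | .eq s t => s.val e = t.val e
  | .lt s t => s.val e < t.val e
  | .mem t i => t.val e ∈ E i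
  | .not φ => ¬ φ.Sat e E
  | .and φ ψ => φ.Sat e E ∧ ψ.Sat e E
  | .or φ ψ => φ.Sat e E ∨ ψ.Sat e E
  | .nall i φ => ∀ n : ℕ, φ.Sat (Function.update e i n) E
  | .nex i φ => ∃ n : ℕ, φ.Sat (Function.update e i n) E
  | .sall i φ => ∀ X : Set ℕ, φ.Sat e (Function.update E i X)
  | .sex i φ => ∃ X : Set ℕ, φ.Sat e (Function.update E i X)

/-- Satisfaction in an ω-model with second-order part `M`:
set quantifiers range over `M`. -/
def Formula.SatIn (M : Set (Set ℕ)) (e : ℕ → ℕ) (E : ℕ → Set ℕ) : Formula → Prop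
  | .eq s t => s.val e = t.val e
  | .lt s t => s.val e < t.val e
  | .mem t i => t.val e ∈ E i
  | .not φ => ¬ φ.SatIn M e E
  | .and φ ψ => φ.SatIn M e E ∧ ψ.SatIn M e E
  | .or φ ψ => φ.SatIn M e E ∨ ψ.SatIn M e E
  | .nall i φ => ∀ n : ℕ, φ.SatIn M (Function.update e i n) E
  | .nex i φ => ∃ n : ℕ, φ.SatIn M (Function.update e i n) E
  | .sall i φ => ∀ X ∈ M, φ.SatIn M e (Function.update E i X)
  | .sex i φ => ∃ X ∈ M, φ.SatIn M e (Function.update E i X)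

/-- A formula is arithmetic if it has no set quantifiers. -/
def Formula.Arithmetic : Formula → Prop
  | .eq _ _ => True
  | .lt _ _ => True
  | .mem _ _ => True
  | .not φ => φ.Arithmetic
  | .and φ ψ => φ.Arithmetic ∧ ψ.Arithmetic
  | .or φ ψ => φ.Arithmetic ∧ ψ.Arithmetic
  | .nall _ φ => φ.Arithmetic
  | .nex _ φ => φ.Arithmetic
  | .sall _ _ => False
  | .sex _ _ => False

mutual
  /-- Σ¹ₙ formulas (in prenex normal form). -/
  inductive Formula.IsSigma : ℕ → Formula → Prop where
    | arith {n : ℕ} {φ : Formula} : φ.Arithmetic → Formula.IsSigma n φ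
    | ofPi {n : ℕ} {φ : Formula} : Formula.IsPi n φ → Formula.IsSigma (n+1) φ
    | sex {n i : ℕ} {φ : Formula} :
        Formula.IsSigma (n+1) φ → Formula.IsSigma (n+1) (.sex i φ)
  /-- Π¹ₙ formulas (in prenex normal form). -/
  inductive Formula.IsPi : ℕ → Formula → Prop where
    | arith {n : ℕ} {φ : Formula} : φ.Arithmetic → Formula.IsPi n φ
    | ofSigma {n : ℕ} {φ : Formula} : Formula.IsSigma n φ → Formula.IsPi (n+1) φ
    | sall {n i : ℕ} {φ : Formula} :
        Formula.IsPi (n+1) φ → Formula.IsPi (n+1) (.sall i φ)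
end

/-- Quantifier-free formulas. -/
def Formula.QFree : Formula → Prop
  | .eq _ _ => True
  | .lt _ _ => True
  | .mem _ _ => True
  | .not φ => φ.QFree
  | .and φ ψ => φ.QFree ∧ ψ.QFree
  | .or φ ψ => φ.QFree ∧ ψ.QFree
  | .nall _ _ => False
  | .nex _ _ => False
  | .sall _ _ => False
  | .sex _ _ => False

/-- Existential (Σ⁰₁-defining) formulas: number-existential quantifiers over a
quantifier-free matrix.  (By the relativized Matiyasevich theorem these define
exactly the sets r.e. in the set parameters.) -/
inductive Formula.Existential : Formula → Prop where
  | qf {φ : Formula} : φ.QFree → Formula.Existential φ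
  | nex {i : ℕ} {φ : Formula} : Formula.Existential φ → Formula.Existential (.nex i φ)

/-- Gödel codes of terms. -/
def Term.code : Term → ℕ
  | .var i => Nat.pair 0 i
  | .zero => Nat.pair 1 0
  | .one => Nat.pair 2 0
  | .add s t => Nat.pair 3 (Nat.pair s.code t.code)
  | .mul s t => Nat.pair 4 (Nat.pair s.code t.code)

/-- Gödel codes of formulas. -/
def Formula.code : Formula → ℕ
  | .eq s t => Nat.pair 0 (Nat.pair s.code t.code)
  | .lt s t => Nat.pair 1 (Nat.pair s.code t.code)
  | .mem t i => Nat.pair 2 (Nat.pair t.code i)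
  | .not φ => Nat.pair 3 φ.code
  | .and φ ψ => Nat.pair 4 (Nat.pair φ.code ψ.code)
  | .or φ ψ => Nat.pair 5 (Nat.pair φ.code ψ.code)
  | .nall i φ => Nat.pair 6 (Nat.pair i φ.code)
  | .nex i φ => Nat.pair 7 (Nat.pair i φ.code)
  | .sall i φ => Nat.pair 8 (Nat.pair i φ.code)
  | .sex i φ => Nat.pair 9 (Nat.pair i φ.code)

/-! ### Reducibilities and jumps -/

/-- `B` is r.e. in `A`: definable by an existential formula with parameter `A`
(the free number variables are all evaluated at the input `n`,
the set variables at `A`). -/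
def REIn (B A : Set ℕ) : Prop :=
  ∃ φ : Formula, φ.Existential ∧ ∀ n : ℕ, n ∈ B ↔ φ.Sat (fun _ => n) (fun _ => A)

/-- Turing reducibility: `B` is Δ⁰₁ in `A`. -/
def TuringLE (B A : Set ℕ) : Prop := REIn B A ∧ REIn Bᶜ A

/-- The Turing jump of `A`: the set of codes of true existential sentences with
parameter `A` (a complete Σ⁰₁(A) set). -/
def turingJump (A : Set ℕ) : Set ℕ :=
  {n | ∃ φ : Formula, φ.code = n ∧ φ.Existential ∧ φ.Sat (fun _ => 0) (fun _ => A)}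

/-- Hyperarithmetic reducibility: `B` is Δ¹₁ definable with parameter `A`. -/
def HypLE (B A : Set ℕ) : Prop :=
  ∃ φ ψ : Formula, φ.IsSigma 1 ∧ ψ.IsPi 1 ∧
    ∀ n : ℕ, (n ∈ B ↔ φ.Sat (fun _ => n) (fun _ => A)) ∧
      (n ∈ B ↔ ψ.Sat (fun _ => n) (fun _ => A))

/-- The hyperjump `𝒪^A` of `A`: the set of codes of true Π¹₁ sentences with
parameter `A` (a complete Π¹₁(A) set). -/
def hyperjump (A : Set ℕ) : Set ℕ :=
  {n | ∃ φ : Formula, φ.code = n ∧ φ.IsPi 1 ∧ φ.Sat (fun _ => 0) (fun _ => A)}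

/-! ### β-models and coded models -/

/-- A βₙ-model: a (nonempty) ω-model correct for Σ¹ₙ formulas with parameters
from the model. -/
def IsBetaNModel (n : ℕ) (M : Set (Set ℕ)) : Prop :=
  M.Nonempty ∧ ∀ φ : Formula, φ.IsSigma n →
    ∀ (e : ℕ → ℕ) (E : ℕ → Set ℕ), (∀ i, E i ∈ M) → (φ.SatIn M e E ↔ φ.Sat e E)

/-- A β-model is a β₁-model. -/
def IsBetaModel (M : Set (Set ℕ)) : Prop := IsBetaNModel 1 M

/-- The `i`-th slice of a real `C` coding a countable family of reals. -/
def slice (C : Set ℕ) (i : ℕ) : Set ℕ := {m | Nat.pair i m ∈ C}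

/-- The countable family of reals coded by `C`. -/
def codedFamily (C : Set ℕ) : Set (Set ℕ) := Set.range (slice C)

/-- `C` is a countable coded β-model. -/
def IsCodedBetaModel (C : Set ℕ) : Prop := IsBetaModel (codedFamily C)

/-- `C` is a countable coded βₙ-model. -/
def IsCodedBetaNModel (n : ℕ) (C : Set ℕ) : Prop := IsBetaNModel n (codedFamily C)

/-- An ω-model `M` satisfies the L₂-theory `T` (open axioms are satisfied under
all assignments with set parameters from `M`). -/
def SatisfiesTheory (M : Set (Set ℕ)) (T : Set Formula) : Prop :=
  ∀ φ ∈ T, ∀ (e : ℕ → ℕ) (E : ℕ → Set ℕ), (∀ i, E i ∈ M) → φ.SatIn M e E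

end Paper

/-!
Among the countable coded β-models of `T`, take one whose `familyHeight`, the supremum of the
heights of the well-founded relations in the model, is least. If its model contained a code `D`
of a β-model, then, `D`'s model being a β-model, well-foundedness of its members is decided by
an arithmetic formula in `D`; so the disjoint sum of the well-founded members of `D`'s model,
each with a top point added, is arithmetic in `D` and lies in the outer β-model. That sum is
well-founded and strictly higher than every well-founded member of `D`'s model, so `D` would
have smaller `familyHeight`. If `T` has no countable coded β-model, any β-model of `T` will do.
-/

universe u

theorem Acc.rank_le_rank_of_map {α β : Type u} {r : α → α → Prop} {s : β → β → Prop}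
    (f : α → β) (hf : ∀ a b, r a b → s (f a) (f b)) {a : α} (ha : Acc r a) (hfa : Acc s (f a)) :
    ha.rank ≤ hfa.rank := by
  induction ha with
  | intro a _ ih =>
    rw [Acc.rank_eq]
    refine Ordinal.iSup_le fun ⟨b, hb⟩ => Order.succ_le_of_lt ?_
    exact (ih b hb (hfa.inv (hf b a hb))).trans_lt (hfa.rank_lt_of_rel (hf b a hb))

open Classical in
noncomputable def relHeight {α : Type u} (r : α → α → Prop) : Ordinal.{u} :=
  if h : WellFounded r then ⨆ a, (h.apply a).rank + 1 else 0

theorem relHeight_eq_zero {α : Type u} {r : α → α → Prop} (hr : ¬ WellFounded r) :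
    relHeight r = 0 :=
  dif_neg hr

theorem rank_lt_relHeight {α : Type u} {r : α → α → Prop} (hr : WellFounded r) (a : α) :
    (hr.apply a).rank < relHeight r := by
  rw [relHeight, dif_pos hr]
  exact Ordinal.lt_iSup_add_one (fun a => (hr.apply a).rank) a

theorem relHeight_le_rank_of_map {α β : Type u} {r : α → α → Prop} {s : β → β → Prop}
    (hr : WellFounded r) (hs : WellFounded s) (f : α → β) (hf : ∀ a b, r a b → s (f a) (f b))
    (t : β) (ht : ∀ a, s (f a) t) : relHeight r ≤ (hs.apply t).rank := by
  rw [relHeight, dif_pos hr]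
  exact Ordinal.iSup_add_one_le fun a =>
    ((hr.apply a).rank_le_rank_of_map f hf (hs.apply (f a))).trans_lt
      ((hs.apply t).rank_lt_of_rel (ht a))

namespace Paper

open Function

theorem Formula.satIn_iff_sat_of_arithmetic {φ : Formula} (hφ : φ.Arithmetic)
    (M : Set (Set ℕ)) (e : ℕ → ℕ) (E : ℕ → Set ℕ) : φ.SatIn M e E ↔ φ.Sat e E := by
  induction φ generalizing e with
  | eq | lt | mem => rfl
  | not φ ih => exact not_congr (ih hφ e)
  | and φ ψ ihφ ihψ => exact and_congr (ihφ hφ.1 e) (ihψ hφ.2 e)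
  | or φ ψ ihφ ihψ => exact or_congr (ihφ hφ.1 e) (ihψ hφ.2 e)
  | nall i φ ih => exact forall_congr' fun n => ih hφ _
  | nex i φ ih => exact exists_congr fun n => ih hφ _
  | sall | sex => exact hφ.elim

def Formula.iff (φ ψ : Formula) : Formula := .and (.or (.not φ) ψ) (.or (.not ψ) φ)

@[simp]
theorem Formula.sat_iff (φ ψ : Formula) (e : ℕ → ℕ) (E : ℕ → Set ℕ) :
    (φ.iff ψ).Sat e E ↔ (φ.Sat e E ↔ ψ.Sat e E) := by
  simp only [Formula.iff, Formula.Sat]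
  tauto

def Formula.pairEq (s t p : Term) : Formula :=
  .or (.and (.lt s t) (.eq p (.add (.mul t t) s)))
      (.and (.not (.lt s t)) (.eq p (.add (.add (.mul s s) s) t)))

@[simp]
theorem Formula.sat_pairEq (s t p : Term) (e : ℕ → ℕ) (E : ℕ → Set ℕ) :
    (Formula.pairEq s t p).Sat e E ↔ p.val e = Nat.pair (s.val e) (t.val e) := by
  by_cases h : s.val e < t.val e <;>
    simp [Formula.pairEq, Formula.Sat, Term.val, Nat.pair, h]

@[simp]
theorem Formula.arithmetic_pairEq (s t p : Term) : (Formula.pairEq s t p).Arithmetic := by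
  simp [Formula.pairEq, Formula.Arithmetic]

theorem IsBetaModel.satIn_sall_iff {M : Set (Set ℕ)} (hM : IsBetaModel M) {φ : Formula}
    (hφ : φ.Arithmetic) (i : ℕ) {e : ℕ → ℕ} {E : ℕ → Set ℕ} (hE : ∀ j, E j ∈ M) :
    (Formula.sall i φ).SatIn M e E ↔ (Formula.sall i φ).Sat e E := by
  have hσ := hM.2 (.sex i (.not φ)) (.sex (.arith hφ)) e E hE
  simp only [Formula.SatIn, Formula.Sat] at hσ ⊢
  rw [← not_iff_not]
  simpa only [not_forall, exists_prop] using hσ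

theorem IsBetaModel.mem_of_defines {M : Set (Set ℕ)} (hM : IsBetaModel M) {A B : Set ℕ}
    (hA : A ∈ M) {ψ : Formula} (hψ : ψ.Arithmetic)
    (hdef : ∀ (e : ℕ → ℕ) (E : ℕ → Set ℕ), E 0 = A → (ψ.Sat e E ↔ e 0 ∈ B)) : B ∈ M := by
  set χ : Formula := .nall 0 ((Formula.mem (.var 0) 1).iff ψ)
  have hχ : χ.Arithmetic := by simp [χ, Formula.iff, Formula.Arithmetic, hψ]
  have hχ_sat : ∀ X, χ.Sat (fun _ => 0) (update (fun _ => A) 1 X) ↔ X = B := by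
    intro X
    simp only [χ, Formula.Sat, Formula.sat_iff, Term.val, update_self]
    rw [Set.ext_iff]
    refine forall_congr' fun n => iff_congr Iff.rfl ?_
    simpa using hdef (update (fun _ => 0) 0 n) (update (fun _ => A) 1 X) (by simp)
  obtain ⟨X, hXM, hX⟩ :=
    (hM.2 (.sex 1 χ) (.sex (.arith hχ)) _ _ fun _ => hA).2 ⟨B, (hχ_sat B).2 rfl⟩
  rw [Formula.satIn_iff_sat_of_arithmetic hχ, hχ_sat] at hX
  exact hX ▸ hXM

def Term.shift : Term → Term
  | .var k => .var (3 * k)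
  | .zero => .zero
  | .one => .one
  | .add s t => .add s.shift t.shift
  | .mul s t => .mul s.shift t.shift

theorem Term.val_shift (t : Term) (e : ℕ → ℕ) :
    t.shift.val e = t.val (fun k => e (3 * k)) := by
  induction t with
  | var | zero | one => rfl
  | add s t ihs iht => simp only [Term.shift, Term.val, ihs, iht]
  | mul s t ihs iht => simp only [Term.shift, Term.val, ihs, iht]

/-- Satisfaction in the model coded by the set variable `X_0`, as an arithmetic formula:
number variable `x_k` becomes `x_{3k}`, set variable `X_j` becomes the index `x_{3j+1}` of a
slice, and `x_{3j+2}` is scratch space for `X_j`. -/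
def Formula.toCoded : Formula → Formula
  | .eq s t => .eq s.shift t.shift
  | .lt s t => .lt s.shift t.shift
  | .mem t j => .nex (3 * j + 2)
      (.and (.pairEq (.var (3 * j + 1)) t.shift (.var (3 * j + 2)))
        (.mem (.var (3 * j + 2)) 0))
  | .not φ => .not φ.toCoded
  | .and φ ψ => .and φ.toCoded ψ.toCoded
  | .or φ ψ => .or φ.toCoded ψ.toCoded
  | .nall i φ => .nall (3 * i) φ.toCoded
  | .nex i φ => .nex (3 * i) φ.toCoded
  | .sall j φ => .nall (3 * j + 1) φ.toCoded
  | .sex j φ => .nex (3 * j + 1) φ.toCoded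

theorem Formula.arithmetic_toCoded (φ : Formula) : φ.toCoded.Arithmetic := by
  induction φ <;> simp [Formula.toCoded, Formula.Arithmetic, *]

theorem update_three_mul_apply_three_mul {α : Type*} (e : ℕ → α) (i : ℕ) (a : α) :
    (fun k => update e (3 * i) a (3 * k)) = update (fun k => e (3 * k)) i a :=
  update_comp_eq_of_injective e (mul_right_injective₀ three_ne_zero) i a

theorem update_three_mul_apply_three_mul_add_one {α : Type*} (e : ℕ → α) (i j : ℕ) (a : α) :
    update e (3 * i) a (3 * j + 1) = e (3 * j + 1) :=
  update_of_ne (by omega) _ _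

theorem update_three_mul_add_one_apply_three_mul {α : Type*} (e : ℕ → α) (i k : ℕ) (a : α) :
    update e (3 * i + 1) a (3 * k) = e (3 * k) :=
  update_of_ne (by omega) _ _

theorem comp_update_three_mul_add_one {α β : Type*} (g : α → β) (e : ℕ → α) (i : ℕ) (a : α) :
    (fun j => g (update e (3 * i + 1) a (3 * j + 1))) =
      update (fun j => g (e (3 * j + 1))) i (g a) := by
  funext j
  simp only [update_apply]
  split_ifs <;> first | rfl | omega

theorem Formula.sat_toCoded (φ : Formula) {D : Set ℕ} {E : ℕ → Set ℕ} (hD : E 0 = D)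
    (e : ℕ → ℕ) : φ.toCoded.Sat e E ↔
      φ.SatIn (codedFamily D) (fun k => e (3 * k)) (fun j => slice D (e (3 * j + 1))) := by
  induction φ generalizing e with
  | eq | lt => simp only [Formula.toCoded, Formula.Sat, Formula.SatIn, Term.val_shift]
  | mem t j =>
    have hscratch : ∀ n, (fun k => update e (3 * j + 2) n (3 * k)) = fun k => e (3 * k) :=
      fun n => funext fun k => update_of_ne (by omega) _ _
    simp only [Formula.toCoded, Formula.Sat, Formula.SatIn, Formula.sat_pairEq, Term.val,
      Term.val_shift, hscratch, hD, update_self,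
      update_of_ne (show 3 * j + 1 ≠ 3 * j + 2 by omega)]
    simp [slice]
  | not φ ih => exact not_congr (ih e)
  | and φ ψ ihφ ihψ => exact and_congr (ihφ e) (ihψ e)
  | or φ ψ ihφ ihψ => exact or_congr (ihφ e) (ihψ e)
  | nall i φ ih | nex i φ ih =>
    simp only [Formula.toCoded, Formula.Sat, Formula.SatIn, ih,
      update_three_mul_apply_three_mul, update_three_mul_apply_three_mul_add_one]
  | sall j φ ih | sex j φ ih =>
    simp only [Formula.toCoded, Formula.Sat, Formula.SatIn, ih,
      update_three_mul_add_one_apply_three_mul, comp_update_three_mul_add_one, codedFamily,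
      Set.forall_mem_range, Set.exists_range_iff]

def rel (X : Set ℕ) (a b : ℕ) : Prop := Nat.pair a b ∈ X

def hasMinFormula : Formula :=
  .or (.not (.nex 0 (.mem (.var 0) 0)))
    (.nex 0 (.and (.mem (.var 0) 0) (.nall 1 (.or (.not (.mem (.var 1) 0))
      (.not (.nex 2 (.and (.pairEq (.var 1) (.var 0) (.var 2)) (.mem (.var 2) 1))))))))

def wfFormula : Formula := .sall 0 hasMinFormula

theorem arithmetic_hasMinFormula : hasMinFormula.Arithmetic := by
  simp [hasMinFormula, Formula.Arithmetic]

theorem sat_hasMinFormula (e : ℕ → ℕ) (E : ℕ → Set ℕ) :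
    hasMinFormula.Sat e E ↔ ((E 0).Nonempty → ∃ n ∈ E 0, ∀ m ∈ E 0, ¬ rel (E 1) m n) := by
  simp [hasMinFormula, Formula.Sat, Term.val, rel, imp_iff_not_or, Set.Nonempty]

theorem sat_wfFormula (e : ℕ → ℕ) (E : ℕ → Set ℕ) :
    wfFormula.Sat e E ↔ WellFounded (rel (E 1)) := by
  simp [wfFormula, Formula.Sat, sat_hasMinFormula, WellFounded.wellFounded_iff_has_min]

theorem IsBetaModel.satIn_wfFormula_iff {M : Set (Set ℕ)} (hM : IsBetaModel M) {e : ℕ → ℕ}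
    {E : ℕ → Set ℕ} (hE : ∀ i, E i ∈ M) : wfFormula.SatIn M e E ↔ WellFounded (rel (E 1)) :=
  (hM.satIn_sall_iff arithmetic_hasMinFormula 0 hE).trans (sat_wfFormula e E)

theorem IsCodedBetaModel.sat_toCoded_wfFormula {D : Set ℕ} (hD : IsCodedBetaModel D)
    {E : ℕ → Set ℕ} (hE : E 0 = D) (e : ℕ → ℕ) :
    wfFormula.toCoded.Sat e E ↔ WellFounded (rel (slice D (e 4))) :=
  (wfFormula.sat_toCoded hE e).trans (hD.satIn_wfFormula_iff fun _ => ⟨_, rfl⟩)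

/-- The top points `(j, 0)` make each well-founded slice strictly lower than the sum. -/
def wfSum (D : Set ℕ) (x y : ℕ) : Prop :=
  ∃ j a, x = Nat.pair j (a + 1) ∧ WellFounded (rel (slice D j)) ∧
    (y = Nat.pair j 0 ∨ ∃ b, y = Nat.pair j (b + 1) ∧ rel (slice D j) a b)

/-- Defines `wfSum D` from `D = X_0`; the slice index sits in `x_4`, the number variable that
`toCoded` assigns to the set variable `X_1` of `wfFormula`. -/
def wfSumFormula : Formula :=
  .nex 6 (.nex 7 (.and (.pairEq (.var 6) (.var 7) (.var 0))
    (.nex 4 (.nex 8 (.and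
      (.and (.pairEq (.var 4) (.add (.var 8) .one) (.var 6)) wfFormula.toCoded)
      (.or (.pairEq (.var 4) .zero (.var 7))
        (.nex 9 (.and (.pairEq (.var 4) (.add (.var 9) .one) (.var 7))
          (.nex 10 (.and (.pairEq (.var 8) (.var 9) (.var 10))
            (.nex 11 (.and (.pairEq (.var 4) (.var 10) (.var 11)) (.mem (.var 11) 0)))))))))))))

theorem arithmetic_wfSumFormula : wfSumFormula.Arithmetic := by
  simp [wfSumFormula, Formula.Arithmetic, Formula.arithmetic_toCoded]

theorem IsCodedBetaModel.sat_wfSumFormula {D : Set ℕ} (hD : IsCodedBetaModel D)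
    {E : ℕ → Set ℕ} (hE : E 0 = D) (e : ℕ → ℕ) :
    wfSumFormula.Sat e E ↔ ∃ x y, e 0 = Nat.pair x y ∧ wfSum D x y := by
  simp [wfSumFormula, Formula.Sat, Term.val, hD.sat_toCoded_wfFormula hE, hE,
    wfSum, rel, slice]

theorem acc_wfSum_pair_succ {D : Set ℕ} {j : ℕ} (hwf : WellFounded (rel (slice D j)))
    (a : ℕ) : Acc (wfSum D) (Nat.pair j (a + 1)) := by
  induction a using hwf.induction with
  | _ a ih =>
    refine ⟨_, ?_⟩
    rintro _ ⟨j', a', rfl, -, h | ⟨b, h, hab⟩⟩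
    · simp [Nat.pair_eq_pair] at h
    · obtain ⟨rfl, hb⟩ := Nat.pair_eq_pair.1 h
      obtain rfl : a = b := by omega
      exact ih a' hab

theorem wellFounded_wfSum (D : Set ℕ) : WellFounded (wfSum D) :=
  ⟨fun _ => ⟨_, fun _ ⟨_, a, hx, hwf, _⟩ => hx ▸ acc_wfSum_pair_succ hwf a⟩⟩

theorem relHeight_slice_lt_relHeight_wfSum (D : Set ℕ) (j : ℕ) :
    relHeight (rel (slice D j)) < relHeight (wfSum D) := by
  have hW := wellFounded_wfSum D
  calc relHeight (rel (slice D j)) ≤ (hW.apply (Nat.pair j 0)).rank := by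
        by_cases hwf : WellFounded (rel (slice D j))
        · exact relHeight_le_rank_of_map hwf hW (fun a => Nat.pair j (a + 1))
            (fun a b hab => ⟨j, a, rfl, hwf, .inr ⟨b, rfl, hab⟩⟩) _
            (fun a => ⟨j, a, rfl, hwf, .inl rfl⟩)
        · exact (relHeight_eq_zero hwf).trans_le zero_le
    _ < relHeight (wfSum D) := rank_lt_relHeight hW _

noncomputable def familyHeight (M : Set (Set ℕ)) : Ordinal.{0} :=
  ⨆ X : M, relHeight (rel X) + 1

theorem IsBetaModel.familyHeight_codedFamily_lt {M : Set (Set ℕ)} (hM : IsBetaModel M)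
    {D : Set ℕ} (hDM : D ∈ M) (hD : IsCodedBetaModel D) :
    familyHeight (codedFamily D) < familyHeight M := by
  set W : Set ℕ := {n | wfSum D n.unpair.1 n.unpair.2}
  have hrel : rel W = wfSum D := by
    funext x y
    simp [rel, W]
  have hWM : W ∈ M := by
    refine hM.mem_of_defines hDM arithmetic_wfSumFormula fun e E hE => ?_
    rw [hD.sat_wfSumFormula hE]
    constructor
    · rintro ⟨x, y, he, hxy⟩
      simpa [W, he] using hxy
    · exact fun h => ⟨_, _, (Nat.pair_unpair _).symm, h⟩
  calc familyHeight (codedFamily D) ≤ relHeight (rel W) := by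
        refine Ordinal.iSup_add_one_le ?_
        rintro ⟨_, j, rfl⟩
        rw [hrel]
        exact relHeight_slice_lt_relHeight_wfSum D j
    _ < familyHeight M := Ordinal.lt_iSup_add_one (fun X : M => relHeight (rel X)) ⟨W, hWM⟩

/-- **Theorem 4.1 (after Mummert–Simpson).**  If an L₂ theory `T` has a β-model
then it has a β-model containing no countable coded β-model of `T`. -/
theorem minimal_beta_model (T : Set Formula)
    (h : ∃ M : Set (Set ℕ), IsBetaModel M ∧ SatisfiesTheory M T) :
    ∃ M : Set (Set ℕ), IsBetaModel M ∧ SatisfiesTheory M T ∧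
      ¬ ∃ C ∈ M, IsCodedBetaModel C ∧ SatisfiesTheory (codedFamily C) T := by
  by_cases hcoded : ∃ C, IsCodedBetaModel C ∧ SatisfiesTheory (codedFamily C) T
  · obtain ⟨C, ⟨hC, hCT⟩, hmin⟩ :=
      (InvImage.wf (fun C => familyHeight (codedFamily C)) Ordinal.lt_wf).has_min
        {C | IsCodedBetaModel C ∧ SatisfiesTheory (codedFamily C) T} hcoded
    exact ⟨codedFamily C, hC, hCT, fun ⟨D, hDC, hD, hDT⟩ =>
      hmin D ⟨hD, hDT⟩ (hC.familyHeight_codedFamily_lt hDC hD)⟩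
  · obtain ⟨M, hM, hMT⟩ := h
    exact ⟨M, hM, hMT, fun ⟨C, _, hC⟩ => hcoded ⟨C, hC⟩⟩

end Paper
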